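/- arXiv:2205.06637 — 3 statements merged into one kernel-verified Lean document; each statement's English description precedes it below -/
import Mathlib

section
/- Consider a finite game: a finite nonempty index type I of players, for each player i a finite nonempty strategy type A i, profiles Π i, A i, and cost functions c : I → (Π i, A i) → ℝ. Say profile d' is obtained from d by a unilateral improvement step of player i if d' = Function.update d i a for some a : A i and c i d' < c i d. If there is no infinite sequence of profiles d : ℕ → (Π i, A i) in which each d(n+1) is obtained from d(n) by a unilateral improvement step of some player, then there exists a Nash equilibrium: a profile d* such that for every player i and every strategy a : A i, c i d* ≤ c i (Function.update d* i a). -/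
/-!
The finite improvement property says precisely that the improvement-step relation is well
founded, and a minimal profile for it admits no improving unilateral deviation.
-/

section Game

variable {I : Type*} [DecidableEq I] {A : I → Type*} (c : I → (∀ i, A i) → ℝ)

/-- The new profile `d'` comes first, as in `WellFounded`, so that well-foundedness of this
relation is the finite improvement property. -/
def IsImprovementStep (d' d : ∀ i, A i) : Prop :=
  ∃ (i : I) (a : A i), d' = Function.update d i a ∧ c i d' < c i d

def IsNashEquilibrium (d : ∀ i, A i) : Prop :=
  ∀ (i : I) (a : A i), c i d ≤ c i (Function.update d i a)

theorem wellFounded_isImprovementStep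
    (hFIP : ¬ ∃ d : ℕ → ∀ i, A i, ∀ n, IsImprovementStep c (d (n + 1)) (d n)) :
    WellFounded (IsImprovementStep c) :=
  wellFounded_iff_isEmpty_descending_chain.2 ⟨fun ⟨d, hd⟩ => hFIP ⟨d, hd⟩⟩

theorem isNashEquilibrium_of_forall_not_isImprovementStep {d : ∀ i, A i}
    (h : ∀ d', ¬ IsImprovementStep c d' d) : IsNashEquilibrium c d :=
  fun i a => not_lt.1 fun hlt => h _ ⟨i, a, rfl, hlt⟩

theorem WellFounded.exists_isNashEquilibrium [∀ i, Nonempty (A i)]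
    (hwf : WellFounded (IsImprovementStep c)) : ∃ d, IsNashEquilibrium c d := by
  obtain ⟨d, -, hmin⟩ := hwf.has_min Set.univ Set.univ_nonempty
  exact ⟨d, isNashEquilibrium_of_forall_not_isImprovementStep c fun d' => hmin d' trivial⟩

end Game

theorem fip_implies_nash_equilibrium_general
    {I : Type*} [DecidableEq I]
    (A : I → Type*) [∀ i, Nonempty (A i)]
    (c : I → (∀ i, A i) → ℝ)
    (hFIP : ¬ ∃ d : ℕ → ∀ i, A i, ∀ n : ℕ, ∃ (i : I) (a : A i),
      d (n + 1) = Function.update (d n) i a ∧ c i (d (n + 1)) < c i (d n)) :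
    ∃ dstar : ∀ i, A i, ∀ (i : I) (a : A i),
      c i dstar ≤ c i (Function.update dstar i a) :=
  (wellFounded_isImprovementStep c hFIP).exists_isNashEquilibrium c

/-- A finite game with the finite improvement property (no infinite sequence of
unilateral improvement steps) has a Nash equilibrium. -/
theorem fip_implies_nash_equilibrium
    {I : Type*} [Finite I] [Nonempty I] [DecidableEq I]
    (A : I → Type*) [∀ i, Finite (A i)] [∀ i, Nonempty (A i)]
    (c : I → (∀ i, A i) → ℝ)
    (hFIP : ¬ ∃ d : ℕ → ∀ i, A i, ∀ n : ℕ, ∃ (i : I) (a : A i),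
      d (n + 1) = Function.update (d n) i a ∧ c i (d (n + 1)) < c i (d n)) :
    ∃ dstar : ∀ i, A i, ∀ (i : I) (a : A i),
      c i dstar ≤ c i (Function.update dstar i a) :=
  fip_implies_nash_equilibrium_general A c hFIP
end

section
/- Consider a finite game: a finite index type I of players, for each player i a finite strategy type A i, profiles Π i, A i, and cost functions c : I → (Π i, A i) → ℝ. Suppose Φ : (Π i, A i) → ℝ is an ordinal potential: for every profile d, every player i, and every a : A i, if c i (Function.update d i a) < c i d then Φ (Function.update d i a) < Φ d. Then there is no infinite sequence of profiles d : ℕ → (Π i, A i) in which each d(n+1) is obtained from d(n) by a unilateral improvement step of some player (i.e., d(n+1) = Function.update (d n) i a with c i (d(n+1)) < c i (d n)). In particular, the game has the finite improvement property. -/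
theorem not_strictAnti_comp_of_finite {α β : Type*} [Finite α] [Preorder β]
    (g : α → β) (d : ℕ → α) : ¬ StrictAnti (g ∘ d) :=
  fun h => not_injective_infinite_finite d h.injective.of_comp

/-- A finite game admitting an ordinal potential has no infinite sequence of
unilateral improvement steps; i.e., it has the finite improvement property. -/
theorem ordinal_potential_implies_fip
    {I : Type*} [Finite I] [DecidableEq I]
    (A : I → Type*) [∀ i, Finite (A i)]
    (c : I → (∀ i, A i) → ℝ) (Φ : (∀ i, A i) → ℝ)
    (hΦ : ∀ (d : ∀ i, A i) (i : I) (a : A i),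
      c i (Function.update d i a) < c i d → Φ (Function.update d i a) < Φ d) :
    ¬ ∃ d : ℕ → ∀ i, A i, ∀ n : ℕ, ∃ (i : I) (a : A i),
      d (n + 1) = Function.update (d n) i a ∧ c i (d (n + 1)) < c i (d n) := by
  rintro ⟨d, hd⟩
  refine not_strictAnti_comp_of_finite Φ d (strictAnti_nat_of_succ_lt fun n => ?_)
  obtain ⟨i, a, hstep, hcost⟩ := hd n
  rw [hstep] at hcost
  simpa only [Function.comp_apply, hstep] using hΦ (d n) i a hcost
end

section
/- Consider a finite game with index type I, strategy types A i, profiles S = Π i, A i with S finite, costs c : I → S → ℝ, and an ordinal potential Φ : S → ℝ (every unilateral improvement step strictly decreases Φ). Then along any improvement path d : Fin (n+1) → S, in which each d(k+1) is obtained from d(k) by a unilateral improvement step, all visited profiles are pairwise distinct; consequently the path length satisfies n + 1 ≤ Fintype.card S. -/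
namespace Game

variable {I : Type*} [DecidableEq I] {A : I → Type*} {β γ : Type*}

def IsImprovementStep [LT β] (c : I → (∀ i, A i) → β) (d d' : ∀ i, A i) : Prop :=
  ∃ (i : I) (a : A i), d' = Function.update d i a ∧ c i d' < c i d

def IsImprovementPath [LT β] (c : I → (∀ i, A i) → β) {n : ℕ} (d : Fin (n + 1) → ∀ i, A i) :
    Prop :=
  ∀ k : Fin n, IsImprovementStep c (d k.castSucc) (d k.succ)

variable [LT β] [Preorder γ] {c : I → (∀ i, A i) → β} {Φ : (∀ i, A i) → γ}

theorem IsImprovementStep.potential_lt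
    (hΦ : ∀ (d : ∀ i, A i) (i : I) (a : A i),
      c i (Function.update d i a) < c i d → Φ (Function.update d i a) < Φ d)
    {d d' : ∀ i, A i} (h : IsImprovementStep c d d') : Φ d' < Φ d := by
  obtain ⟨i, a, rfl, hlt⟩ := h
  exact hΦ d i a hlt

namespace IsImprovementPath

variable (hΦ : ∀ (d : ∀ i, A i) (i : I) (a : A i),
  c i (Function.update d i a) < c i d → Φ (Function.update d i a) < Φ d)
  {n : ℕ} {d : Fin (n + 1) → ∀ i, A i}
include hΦ

theorem strictAnti_comp (hd : IsImprovementPath c d) : StrictAnti (Φ ∘ d) :=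
  Fin.strictAnti_iff_succ_lt.2 fun k => (hd k).potential_lt hΦ

theorem injective (hd : IsImprovementPath c d) : Function.Injective d :=
  (hd.strictAnti_comp hΦ).injective.of_comp

theorem length_le_card [Fintype I] [∀ i, Fintype (A i)] (hd : IsImprovementPath c d) :
    n + 1 ≤ Fintype.card (∀ i, A i) := by
  simpa using Fintype.card_le_of_injective d (hd.injective hΦ)

end IsImprovementPath

end Game

/-- In a finite game with an ordinal potential, all profiles along an improvement
path are pairwise distinct, so the path length is bounded by the number of
profiles. -/
theorem improvement_path_injective_and_bounded
    {I : Type*} [Fintype I] [DecidableEq I]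
    (A : I → Type*) [∀ i, Fintype (A i)]
    (c : I → (∀ i, A i) → ℝ) (Φ : (∀ i, A i) → ℝ)
    (hΦ : ∀ (d : ∀ i, A i) (i : I) (a : A i),
      c i (Function.update d i a) < c i d → Φ (Function.update d i a) < Φ d)
    (n : ℕ) (d : Fin (n + 1) → ∀ i, A i)
    (hstep : ∀ k : Fin n, ∃ (i : I) (a : A i),
      d k.succ = Function.update (d k.castSucc) i a ∧
      c i (d k.succ) < c i (d k.castSucc)) :
    Function.Injective d ∧ n + 1 ≤ Fintype.card (∀ i, A i) :=
  ⟨Game.IsImprovementPath.injective hΦ hstep, Game.IsImprovementPath.length_le_card hΦ hstep⟩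
end
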